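/- arXiv:1808.09676 — 3 statements merged into one kernel-verified Lean document; each statement's English description precedes it below -/
import Mathlib

section
/- Let N, L, K be positive integers with K ≤ min{N, L}, and let (f_1, θ_1), …, (f_K, θ_K) ∈ [0,1) × [0,1) be pairwise distinct pairs. Then the vectors v_L(f_1) ⊗ v_N(θ_1), …, v_L(f_K) ⊗ v_N(θ_K) ∈ ℂ^{NL} are linearly independent; consequently, for any positive reals p_1, …, p_K, the matrix Σ_{k=1}^K p_k (v_L(f_k) v_L(f_k)ᴴ) ⊗ (v_N(θ_k) v_N(θ_k)ᴴ) has rank exactly K. -/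
/-!
With `x = e^{2πif}` and `y = e^{2πiθ}`, which determine `f, θ ∈ [0,1)`, the vector
`v_L(f) ⊗ v_N(θ)` is the bivariate Vandermonde vector `(x^l y^n)_{l,n}`, and distinct nodes
`(x_k, y_k)` give linearly independent vectors as soon as there are at most `min N L` of them.
The weighted sum of their outer products is `A Aᴴ`, where `A` has the columns `√p_k u_k`,
so its rank is the rank of `A`, namely `K`.
-/

open Matrix Complex
open scoped Kronecker ComplexOrder

/-- The steering vector `v_m(f) ∈ ℂ^m` with `j`-th entry `exp(2πi·j·f)`, `j = 0,…,m−1`. -/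
noncomputable def steer (m : ℕ) (f : ℝ) : Fin m → ℂ :=
  fun j => Complex.exp (2 * (Real.pi : ℂ) * Complex.I * (j : ℕ) * (f : ℝ))

/-- The rank-one outer product `v_m(f) v_m(f)ᴴ`. -/
noncomputable def steerMat (m : ℕ) (f : ℝ) : Matrix (Fin m) (Fin m) ℂ :=
  Matrix.vecMulVec (steer m f) (star (steer m f))

open Finset
open scoped Real

theorem Finset.eq_zero_of_forall_sum_mul_pow_eq_zero {R ι : Type*} [CommRing R] [IsDomain R]
    {s : Finset ι} {x c : ι → R} {m : ℕ} (hx : Set.InjOn x s) (hs : #s ≤ m)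
    (h : ∀ j < m, ∑ k ∈ s, c k * x k ^ j = 0) : ∀ k ∈ s, c k = 0 := by
  let e := s.equivFin
  have hzero : (fun i => c (e.symm i)) = 0 :=
    eq_zero_of_forall_pow_sum_mul_pow_eq_zero (f := fun i => x (e.symm i))
      (hx.injective.comp e.symm.injective) fun j =>
        (e.symm.sum_comp fun k : s => c k * x k ^ (j : ℕ)).trans
          ((sum_coe_sort s _).trans (h j (j.2.trans_le hs)))
  intro k hk
  simpa using congrFun hzero (e ⟨k, hk⟩)

theorem linearIndependent_pow_mul_pow {R ι : Type*} [CommRing R] [IsDomain R] [Fintype ι]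
    {L N : ℕ} {x y : ι → R} (hxy : Function.Injective fun k => (x k, y k))
    (hL : Fintype.card ι ≤ L) (hN : Fintype.card ι ≤ N) :
    LinearIndependent R fun k (i : Fin L × Fin N) => x k ^ (i.1 : ℕ) * y k ^ (i.2 : ℕ) := by
  classical
  rw [Fintype.linearIndependent_iff]
  intro c hc
  have hsum : ∀ l < L, ∀ n < N, ∑ k, c k * (x k ^ l * y k ^ n) = 0 := fun l hl n hn => by
    simpa using congrFun hc (⟨l, hl⟩, ⟨n, hn⟩)
  -- Grouping the terms by the value of `x` reduces to the univariate case, first in `x`,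
  -- then in `y` on each fibre of `x`.
  have hfibre : ∀ n < N, ∀ a ∈ univ.image x, ∑ k with x k = a, c k * y k ^ n = 0 := by
    intro n hn
    refine eq_zero_of_forall_sum_mul_pow_eq_zero (x := id) (Set.injOn_id _)
      (card_image_le.trans hL) fun l hl => ?_
    rw [← hsum l hl n hn, ← sum_fiberwise_of_maps_to (t := univ.image x)
      fun k _ => mem_image_of_mem x (mem_univ k)]
    refine sum_congr rfl fun a _ => ?_
    rw [sum_mul]
    refine sum_congr rfl fun k hk => ?_
    rw [← (mem_filter.1 hk).2, id]
    ring
  intro k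
  have hinj : Set.InjOn y {j | x j = x k} := fun a ha b hb hab =>
    hxy (Prod.ext (ha.trans hb.symm) hab)
  exact eq_zero_of_forall_sum_mul_pow_eq_zero (s := {j | x j = x k}) (by simpa using hinj)
    ((card_filter_le _ _).trans hN)
    (fun n hn => hfibre n hn (x k) (mem_image_of_mem x (mem_univ k))) k (by simp)

theorem Matrix.rank_sum_smul_vecMulVec_star {𝕜 ι m : Type*} [RCLike 𝕜] [Fintype ι] [Fintype m]
    {u : ι → m → 𝕜} (hu : LinearIndependent 𝕜 u) {p : ι → ℝ} (hp : ∀ k, 0 < p k) :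
    (∑ k, (p k : 𝕜) • vecMulVec (u k) (star (u k))).rank = Fintype.card ι := by
  let A : Matrix m ι 𝕜 := of fun i k => (√(p k) : 𝕜) * u k i
  have hA : ∑ k, (p k : 𝕜) • vecMulVec (u k) (star (u k)) = A * Aᴴ := by
    ext i j
    simp only [Matrix.sum_apply, Matrix.smul_apply, vecMulVec_apply, mul_apply,
      conjTranspose_apply, A, of_apply]
    refine sum_congr rfl fun k _ => ?_
    have hsqrt : (p k : 𝕜) = √(p k) * √(p k) := by
      rw [← RCLike.ofReal_mul, Real.mul_self_sqrt (hp k).le]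
    rw [star_mul', Pi.star_apply, RCLike.star_def, RCLike.conj_ofReal, smul_eq_mul, hsqrt]
    ring
  rw [hA, rank_self_mul_conjTranspose, ← rank_transpose]
  exact LinearIndependent.rank_matrix <| hu.units_smul fun k =>
    Units.mk0 (√(p k) : 𝕜) (by simpa using Real.sqrt_ne_zero'.mpr (hp k))

theorem Matrix.kronecker_vecMulVec {R l n : Type*} [CommMonoid R] (a b : l → R) (c d : n → R) :
    vecMulVec a b ⊗ₖ vecMulVec c d =
      vecMulVec (fun i => a i.1 * c i.2) fun j => b j.1 * d j.2 := by
  ext i j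
  exact mul_mul_mul_comm _ _ _ _

theorem steer_eq_pow (m : ℕ) (f : ℝ) (j : Fin m) :
    steer m f j = cexp (2 * π * I * f) ^ (j : ℕ) := by
  rw [steer, ← exp_nat_mul]
  congr 1
  ring

theorem injOn_exp_two_pi_mul_I_mul_Ico :
    Set.InjOn (fun t : ℝ => cexp (2 * π * I * t)) (Set.Ico 0 1) := by
  intro a ha b hb hab
  have h2π : (0 : ℝ) < 2 * π := by positivity
  have hscaled : 2 * π * a = 2 * π * b :=
    Circle.exp_injOn_Ico (a := 0) (b := 2 * π) (by simp)
      ⟨by nlinarith [ha.1], by nlinarith [ha.2]⟩ ⟨by nlinarith [hb.1], by nlinarith [hb.2]⟩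
      (Circle.ext (by simpa [mul_comm, mul_left_comm, mul_assoc] using hab))
  exact mul_left_cancel₀ h2π.ne' hscaled

theorem steering_kronecker_linearIndependent_rank_general
    (N L K : ℕ) (hK : K ≤ min N L)
    (f θ : Fin K → ℝ)
    (hf : ∀ k, f k ∈ Set.Ico (0 : ℝ) 1) (hθ : ∀ k, θ k ∈ Set.Ico (0 : ℝ) 1)
    (hdist : Function.Injective (fun k => (f k, θ k))) :
    LinearIndependent ℂ
      (fun k : Fin K => fun i : Fin L × Fin N => steer L (f k) i.1 * steer N (θ k) i.2) ∧
    ∀ p : Fin K → ℝ, (∀ k, 0 < p k) →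
      (∑ k, (p k : ℂ) • (steerMat L (f k) ⊗ₖ steerMat N (θ k))).rank = K := by
  have hxy : Function.Injective fun k => (cexp (2 * π * I * f k), cexp (2 * π * I * θ k)) :=
    fun a b hab => hdist <| Prod.ext
      (injOn_exp_two_pi_mul_I_mul_Ico (hf a) (hf b) (congrArg Prod.fst hab))
      (injOn_exp_two_pi_mul_I_mul_Ico (hθ a) (hθ b) (congrArg Prod.snd hab))
  have hLI : LinearIndependent ℂ
      (fun k : Fin K => fun i : Fin L × Fin N => steer L (f k) i.1 * steer N (θ k) i.2) := by
    simp only [steer_eq_pow]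
    exact linearIndependent_pow_mul_pow hxy (by simpa using hK.trans (min_le_right _ _))
      (by simpa using hK.trans (min_le_left _ _))
  refine ⟨hLI, fun p hp => ?_⟩
  have hstar (k : Fin K) :
      (fun j : Fin L × Fin N => star (steer L (f k)) j.1 * star (steer N (θ k)) j.2) =
        star fun j => steer L (f k) j.1 * steer N (θ k) j.2 := by
    ext j
    simp only [Pi.star_apply, star_mul']
  simp only [steerMat, kronecker_vecMulVec, hstar]
  exact (rank_sum_smul_vecMulVec_star hLI hp).trans (Fintype.card_fin K)

/-- If `K ≤ min{N,L}` and the pairs `(f_k, θ_k) ∈ [0,1)²` are pairwise distinct, the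
Kronecker vectors `v_L(f_k) ⊗ v_N(θ_k) ∈ ℂ^{NL}` are linearly independent; consequently,
for any positive weights `p_k`, the matrix
`Σ_k p_k (v_L(f_k)v_L(f_k)ᴴ) ⊗ (v_N(θ_k)v_N(θ_k)ᴴ)` has rank exactly `K`. -/
theorem steering_kronecker_linearIndependent_rank
    (N L K : ℕ) (hN : 0 < N) (hL : 0 < L) (hKpos : 0 < K) (hK : K ≤ min N L)
    (f θ : Fin K → ℝ)
    (hf : ∀ k, f k ∈ Set.Ico (0 : ℝ) 1) (hθ : ∀ k, θ k ∈ Set.Ico (0 : ℝ) 1)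
    (hdist : Function.Injective (fun k => (f k, θ k))) :
    LinearIndependent ℂ
      (fun k : Fin K => fun i : Fin L × Fin N => steer L (f k) i.1 * steer N (θ k) i.2) ∧
    ∀ p : Fin K → ℝ, (∀ k, 0 < p k) →
      (∑ k, (p k : ℂ) • (steerMat L (f k) ⊗ₖ steerMat N (θ k))).rank = K :=
  steering_kronecker_linearIndependent_rank_general N L K hK f θ hf hθ hdist
end

section
/- Let n be a positive integer, let R ∈ ℂ^{n×n} be a Hermitian positive definite matrix, and let y ∈ ℂ^n. Then ‖R^{-1/2}(y yᴴ − R)‖_F² = ‖y‖₂² · (yᴴ R⁻¹ y) + tr(R) − 2‖y‖₂², where R^{-1/2} denotes the (unique) positive semidefinite square root of R⁻¹, ‖·‖_F is the Frobenius norm, and yᴴ R⁻¹ y is a nonnegative real number. (Expansion of the covariance fitting criterion.) -/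
/-! Since `S` is Hermitian with `S * S = R⁻¹`, the criterion is `tr((P - R) R⁻¹ (P - R))` for
`P = y yᴴ`; expanding gives `tr(P R⁻¹ P) - 2 tr P + tr R`, and for the rank-one `P` these traces
are `(yᴴ R⁻¹ y)‖y‖²` and `‖y‖²`. -/

open Matrix Complex
open scoped ComplexOrder

namespace Matrix

variable {n α : Type*} [Fintype n]

theorem IsHermitian.conjTranspose_mul_mul_self_mul [NonUnitalSemiring α] [StarRing α]
    {S M : Matrix n n α} (hS : S.IsHermitian) (hM : M.IsHermitian) :
    (S * M)ᴴ * (S * M) = M * (S * S) * M := by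
  rw [conjTranspose_mul, hS.eq, hM.eq, Matrix.mul_assoc, Matrix.mul_assoc, Matrix.mul_assoc]

theorem trace_sub_mul_inv_mul_sub [DecidableEq n] [CommRing α] {R : Matrix n n α}
    (hR : IsUnit R.det) (P : Matrix n n α) :
    ((P - R) * R⁻¹ * (P - R)).trace = (P * R⁻¹ * P).trace - 2 * P.trace + R.trace := by
  have expand : (P - R) * R⁻¹ * (P - R)
      = P * R⁻¹ * P - P * (R⁻¹ * R) - (R * R⁻¹) * P + R * (R⁻¹ * R) := by
    noncomm_ring
  rw [expand, nonsing_inv_mul R hR, mul_nonsing_inv R hR, Matrix.mul_one, Matrix.one_mul,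
    Matrix.mul_one, trace_add, trace_sub, trace_sub]
  ring

theorem trace_vecMulVec_mul_mul_vecMulVec [CommSemiring α] (u v w x : n → α)
    (A : Matrix n n α) :
    (vecMulVec u v * A * vecMulVec w x).trace = (v ⬝ᵥ A *ᵥ w) * (x ⬝ᵥ u) := by
  rw [Matrix.mul_assoc, mul_vecMulVec, vecMulVec_mul_vecMulVec, trace_vecMulVec,
    dotProduct_smul, smul_eq_mul, dotProduct_comm u x]

end Matrix

theorem Complex.star_dotProduct_self {n : Type*} [Fintype n] (y : n → ℂ) :
    star y ⬝ᵥ y = ((∑ i, normSq (y i) : ℝ) : ℂ) := by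
  push_cast
  simp [dotProduct, mul_comm, mul_conj]

theorem covariance_fitting_expansion_general
    (n : ℕ) (R : Matrix (Fin n) (Fin n) ℂ) (hR : R.PosDef)
    (y : Fin n → ℂ)
    (S : Matrix (Fin n) (Fin n) ℂ) (hS : S.PosSemidef) (hSsq : S * S = R⁻¹) :
    ((S * (Matrix.vecMulVec y (star y) - R))ᴴ * (S * (Matrix.vecMulVec y (star y) - R))).trace
      = ((∑ i, Complex.normSq (y i) : ℝ) : ℂ) * (star y ⬝ᵥ (R⁻¹ *ᵥ y))
        + R.trace - 2 * ((∑ i, Complex.normSq (y i) : ℝ) : ℂ) := by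
  have hP : (vecMulVec y (star y)).IsHermitian := by
    rw [IsHermitian, conjTranspose_vecMulVec, star_star]
  rw [hS.isHermitian.conjTranspose_mul_mul_self_mul (hP.sub hR.isHermitian), hSsq,
    trace_sub_mul_inv_mul_sub ((isUnit_iff_isUnit_det R).mp hR.isUnit),
    trace_vecMulVec_mul_mul_vecMulVec, trace_vecMulVec, dotProduct_comm y,
    Complex.star_dotProduct_self]
  ring

/-- Expansion of the covariance fitting criterion: for Hermitian positive definite
`R ∈ ℂ^{n×n}`, `y ∈ ℂ^n`, and `S` the (unique) positive semidefinite square root of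
`R⁻¹`, one has `‖S(y yᴴ − R)‖_F² = ‖y‖₂²·(yᴴ R⁻¹ y) + tr(R) − 2‖y‖₂²`
(as an identity in `ℂ`, using `‖A‖_F² = tr(Aᴴ A)`). -/
theorem covariance_fitting_expansion
    (n : ℕ) (hn : 0 < n) (R : Matrix (Fin n) (Fin n) ℂ) (hR : R.PosDef)
    (y : Fin n → ℂ)
    (S : Matrix (Fin n) (Fin n) ℂ) (hS : S.PosSemidef) (hSsq : S * S = R⁻¹) :
    ((S * (Matrix.vecMulVec y (star y) - R))ᴴ * (S * (Matrix.vecMulVec y (star y) - R))).trace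
      = ((∑ i, Complex.normSq (y i) : ℝ) : ℂ) * (star y ⬝ᵥ (R⁻¹ *ᵥ y))
        + R.trace - 2 * ((∑ i, Complex.normSq (y i) : ℝ) : ℂ) :=
  covariance_fitting_expansion_general n R hR y S hS hSsq
end

section
/- Let N₁, N₂ be positive integers and let S = {1, 2, …, N₁} ∪ {m(N₁+1) : m = 1, …, N₂} ⊆ ℤ be the sensor position set of a nested array with an N₁-element dense subarray and an N₂-element sparse subarray. Then the difference set {a − b : a, b ∈ S} equals the full integer interval {d ∈ ℤ : |d| ≤ N₂(N₁+1) − 1}; in particular, the difference coarray of the nested array is a hole-free (virtual) uniform linear array with 2N₂(N₁+1) − 1 consecutive positions. -/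
/-!
Every sensor lies in `[1, N₂(N₁+1)]`, which bounds the differences. Conversely, with
`P = N₁ + 1`, write `0 ≤ e < N₂P` as `e = qP + r` with `0 ≤ r < P`: then `e` is the
difference of the sparse sensors `(q+1)P` and `P` when `r = 0`, and of the sparse sensor
`(q+1)P` and the dense sensor `P - r ∈ [1, N₁]` otherwise. Negative lags follow by swapping.
-/

open Set Pointwise

def nestedArray (N₁ N₂ : ℕ) : Set ℤ :=
  {x | (1 ≤ x ∧ x ≤ (N₁ : ℤ)) ∨ ∃ m : ℤ, 1 ≤ m ∧ m ≤ (N₂ : ℤ) ∧ x = m * ((N₁ : ℤ) + 1)}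

theorem Int.ncard_setOf_abs_le (n : ℤ) : {d : ℤ | |d| ≤ n}.ncard = (2 * n + 1).toNat := by
  have hIcc : {d : ℤ | |d| ≤ n} = (Finset.Icc (-n) n : Set ℤ) := by
    ext d
    simp [abs_le]
  rw [hIcc, ncard_coe_finset, Int.card_Icc]
  congr 1
  ring

theorem sub_self_subset_setOf_abs_le {s : Set ℤ} {L : ℤ} (hs : s ⊆ Icc 1 L) :
    s - s ⊆ {d | |d| ≤ L - 1} := by
  rintro _ ⟨a, ha, b, hb, rfl⟩
  obtain ⟨ha₁, ha₂⟩ := hs ha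
  obtain ⟨hb₁, hb₂⟩ := hs hb
  show |a - b| ≤ L - 1
  exact abs_le.mpr ⟨by linarith, by linarith⟩

theorem neg_mem_sub_self {s : Set ℤ} {d : ℤ} (hd : d ∈ s - s) : -d ∈ s - s := by
  obtain ⟨a, ha, b, hb, rfl⟩ := hd
  exact ⟨b, hb, a, ha, by ring⟩

namespace nestedArray

variable {N₁ N₂ : ℕ}

theorem mem_of_le {x : ℤ} (h₁ : 1 ≤ x) (h₂ : x ≤ N₁) : x ∈ nestedArray N₁ N₂ :=
  Or.inl ⟨h₁, h₂⟩

theorem mul_mem {m : ℤ} (h₁ : 1 ≤ m) (h₂ : m ≤ N₂) :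
    m * ((N₁ : ℤ) + 1) ∈ nestedArray N₁ N₂ :=
  Or.inr ⟨m, h₁, h₂, rfl⟩

theorem subset_Icc (h₂ : 0 < N₂) : nestedArray N₁ N₂ ⊆ Icc 1 (N₂ * ((N₁ : ℤ) + 1)) := by
  have hN₂ : (1 : ℤ) ≤ N₂ := by exact_mod_cast h₂
  rintro x (⟨hx₁, hx₂⟩ | ⟨m, hm₁, hm₂, rfl⟩)
  · exact ⟨hx₁, by nlinarith⟩
  · exact ⟨by nlinarith, by nlinarith⟩

theorem mem_sub_self_of_nonneg {e : ℤ} (he₀ : 0 ≤ e) (he : e ≤ N₂ * ((N₁ : ℤ) + 1) - 1) :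
    e ∈ nestedArray N₁ N₂ - nestedArray N₁ N₂ := by
  set P : ℤ := (N₁ : ℤ) + 1
  have hP : 0 < P := by positivity
  have hr₀ : 0 ≤ e % P := Int.emod_nonneg e hP.ne'
  have hrP : e % P < P := Int.emod_lt_of_pos e hP
  have hdiv : P * (e / P) + e % P = e := Int.mul_ediv_add_emod e P
  have hq₀ : 0 ≤ e / P := Int.ediv_nonneg he₀ hP.le
  have hq : e / P + 1 ≤ N₂ := by nlinarith
  refine ⟨(e / P + 1) * P, mul_mem (by omega) hq, ?_⟩
  rcases hr₀.eq_or_lt with hr | hr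
  · exact ⟨1 * P, mul_mem le_rfl (by omega), by linarith⟩
  · exact ⟨P - e % P, mem_of_le (by omega) (by omega), by linarith⟩

theorem sub_self_eq (h₂ : 0 < N₂) :
    nestedArray N₁ N₂ - nestedArray N₁ N₂ = {d | |d| ≤ N₂ * ((N₁ : ℤ) + 1) - 1} := by
  refine (sub_self_subset_setOf_abs_le (subset_Icc h₂)).antisymm fun d (hd : |d| ≤ _) => ?_
  obtain ⟨hd₁, hd₂⟩ := abs_le.mp hd
  rcases le_or_gt 0 d with h | h
  · exact mem_sub_self_of_nonneg h hd₂
  · simpa using neg_mem_sub_self (mem_sub_self_of_nonneg (e := -d) (by omega) (by omega))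

end nestedArray

theorem nested_array_difference_coarray_general
    (N₁ N₂ : ℕ) (h₂ : 0 < N₂) :
    let S : Set ℤ :=
      {x | (1 ≤ x ∧ x ≤ (N₁ : ℤ)) ∨
            ∃ m : ℤ, 1 ≤ m ∧ m ≤ (N₂ : ℤ) ∧ x = m * ((N₁ : ℤ) + 1)}
    {d : ℤ | ∃ a ∈ S, ∃ b ∈ S, a - b = d}
        = {d : ℤ | |d| ≤ (N₂ : ℤ) * ((N₁ : ℤ) + 1) - 1} ∧
      {d : ℤ | ∃ a ∈ S, ∃ b ∈ S, a - b = d}.ncard = 2 * N₂ * (N₁ + 1) - 1 := by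
  show nestedArray N₁ N₂ - nestedArray N₁ N₂ = _ ∧ (nestedArray N₁ N₂ - nestedArray N₁ N₂).ncard = _
  rw [nestedArray.sub_self_eq h₂, Int.ncard_setOf_abs_le]
  refine ⟨rfl, ?_⟩
  have hL : 1 ≤ N₂ * (N₁ + 1) := Nat.one_le_iff_ne_zero.mpr (by positivity)
  rw [show (N₂ : ℤ) * (N₁ + 1) = (N₂ * (N₁ + 1) : ℕ) by push_cast; rfl, mul_assoc]
  omega

/-- The difference coarray of a nested array with an `N₁`-element dense subarray at
positions `1,…,N₁` and an `N₂`-element sparse subarray at positions `m(N₁+1)`,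
`m = 1,…,N₂`, is the full hole-free integer interval
`{d : |d| ≤ N₂(N₁+1) − 1}`, consisting of `2N₂(N₁+1) − 1` consecutive positions. -/
theorem nested_array_difference_coarray
    (N₁ N₂ : ℕ) (h₁ : 0 < N₁) (h₂ : 0 < N₂) :
    let S : Set ℤ :=
      {x | (1 ≤ x ∧ x ≤ (N₁ : ℤ)) ∨
            ∃ m : ℤ, 1 ≤ m ∧ m ≤ (N₂ : ℤ) ∧ x = m * ((N₁ : ℤ) + 1)}
    {d : ℤ | ∃ a ∈ S, ∃ b ∈ S, a - b = d}
        = {d : ℤ | |d| ≤ (N₂ : ℤ) * ((N₁ : ℤ) + 1) - 1} ∧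
      {d : ℤ | ∃ a ∈ S, ∃ b ∈ S, a - b = d}.ncard = 2 * N₂ * (N₁ + 1) - 1 :=
  nested_array_difference_coarray_general N₁ N₂ h₂
end
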